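/- arXiv:hep-th/9502068 — 4 statements merged into one kernel-verified Lean document; each statement's English description precedes it below -/
import Mathlib

section
/- The map ω on the sl(N) loop algebra L(sl(N)) = C[t,t⁻¹] ⊗ sl(N), defined on basis elements by ω(tⁿE_{ij}) = (-1)^{i+j+1+nN} t^{-n}E_{ji} and ω(tⁿH_i) = (-1)^{1+nN} t^{-n}H_i, is an involutive Lie algebra automorphism, i.e., ω is a Lie algebra homomorphism with ω² = id. -/
noncomputable section
open Matrix LaurentPolynomial
attribute [local instance] LieRing.ofAssociativeRing

/-- The (gl) loop algebra: matrices over Laurent polynomials. -/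
abbrev gl (N : ℕ) := Matrix (Fin N) (Fin N) (LaurentPolynomial ℂ)

/-- The traceless part: the `sl(N)` loop algebra, as a Lie subalgebra over ℂ. -/
def slC (N : ℕ) : LieSubalgebra ℂ (gl N) where
  carrier := {A | Matrix.trace A = 0}
  add_mem' := by
    intro a b ha hb
    simp only [Set.mem_setOf_eq] at *
    rw [Matrix.trace_add, ha, hb, add_zero]
  zero_mem' := by simp
  smul_mem' := by
    intro c A hA
    simp only [Set.mem_setOf_eq] at *
    rw [Matrix.trace_smul, hA, smul_zero]
  lie_mem' := by
    intro x y hx hy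
    simp only [Set.mem_setOf_eq] at *
    rw [Ring.lie_def, Matrix.trace_sub, Matrix.trace_mul_comm, sub_self]

/-- Basis element `tⁿ E_{ij}` (for `i ≠ j`) of the `sl(N)` loop algebra. -/
def TE (N : ℕ) (n : ℤ) (i j : Fin N) (h : i ≠ j) : slC N :=
  ⟨(T n : LaurentPolynomial ℂ) • Matrix.single i j (1 : LaurentPolynomial ℂ), by
    show Matrix.trace _ = 0
    rw [Matrix.trace_smul]
    first
      | erw [Matrix.trace_single_eq_of_ne h, smul_zero]
      | simp [Matrix.trace_single_eq_of_ne h]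
      | simp [Matrix.trace, Matrix.single_apply, h]⟩

/-- Basis element `tⁿ H_k = tⁿ (E_{kk} - E_{k+1,k+1})` of the `sl(N)` loop algebra. -/
def TH (N : ℕ) (n : ℤ) (k : Fin N) (hk : (k : ℕ) + 1 < N) : slC N :=
  ⟨(T n : LaurentPolynomial ℂ) • (Matrix.single k k (1 : LaurentPolynomial ℂ)
      - Matrix.single (⟨(k : ℕ) + 1, hk⟩ : Fin N) (⟨(k : ℕ) + 1, hk⟩ : Fin N) 1), by
    show Matrix.trace _ = 0
    rw [Matrix.trace_smul, Matrix.trace_sub, Matrix.trace_single_eq_same,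
      Matrix.trace_single_eq_same, sub_self, smul_zero]⟩

/-!
Write `ω(A) = -D φ(A)ᵀ D`, where `φ` is the algebra involution `t ↦ (-1)^N t⁻¹` of `ℂ[t, t⁻¹]`
applied entrywise and `D = diag((-1)^i)`. Entrywise `φ` and conjugation by `D = D⁻¹` are ring
automorphisms, while `A ↦ -Aᵀ` reverses products and hence preserves commutators; so `ω` is a
Lie algebra endomorphism of the loop algebra of `gl(N)`. It preserves tracelessness, it squares to
the identity because `φ² = id`, `D² = 1` and `φ` fixes `D`, and on `tⁿE_{ij}` it produces the
sign `-(-1)^{i+j}(-1)^{nN}`.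
-/

namespace LaurentPolynomial

variable {R : Type*} [CommRing R]

/-- The substitution `T ↦ u T⁻¹`. -/
def invertScale (u : Rˣ) : R[T;T⁻¹] →ₐ[R] R[T;T⁻¹] :=
  AddMonoidAlgebra.lift R R[T;T⁻¹] ℤ
    { toFun n := ((u ^ n.toAdd : Rˣ) : R) • T (-n.toAdd)
      map_one' := by simp [T_zero]
      map_mul' a b := by
        rw [toAdd_mul, _root_.zpow_add, Units.val_mul, neg_add, T_add, smul_mul_smul_comm] }

@[simp]
theorem invertScale_T (u : Rˣ) (n : ℤ) :
    invertScale u (T n) = ((u ^ n : Rˣ) : R) • T (-n) :=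
  (AddMonoidAlgebra.lift_single _ n 1).trans (one_smul _ _)

theorem involutive_invertScale (u : Rˣ) : Function.Involutive (invertScale u) := by
  intro f
  induction f using LaurentPolynomial.induction_on' with
  | add p q hp hq => rw [map_add, map_add, hp, hq]
  | C_mul_T n a => simp [← smul_eq_C_mul, smul_smul]

end LaurentPolynomial

def LieHom.restrict {R L : Type*} [CommRing R] [LieRing L] [LieAlgebra R L] (f : L →ₗ⁅R⁆ L)
    (K : LieSubalgebra R L) (h : ∀ x ∈ K, f x ∈ K) : K →ₗ⁅R⁆ K where
  toFun x := ⟨f x, h x x.2⟩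
  map_add' x y := Subtype.ext (map_add f (x : L) y)
  map_smul' c x := Subtype.ext (map_smul f c (x : L))
  map_lie' := Subtype.ext (f.map_lie _ _)

namespace Matrix

section SignDiagonal

variable {n R : Type*} [DecidableEq n] [Ring R] (ε : n → ℤˣ)

def signDiagonal : Matrix n n R := diagonal fun i => ((ε i : ℤ) : R)

theorem signDiagonal_transpose : (signDiagonal ε : Matrix n n R)ᵀ = signDiagonal ε :=
  diagonal_transpose _

variable [Fintype n]

theorem signDiagonal_mul_self : signDiagonal ε * signDiagonal ε = (1 : Matrix n n R) := by
  simp [signDiagonal, ← Int.cast_mul, ← Units.val_mul]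

theorem signDiagonal_mul_signDiagonal_mul (A : Matrix n n R) :
    signDiagonal ε * (signDiagonal ε * A) = A := by
  rw [← Matrix.mul_assoc, signDiagonal_mul_self, Matrix.one_mul]

end SignDiagonal

variable {n S R : Type*} [Fintype n] [DecidableEq n] [CommRing S] [CommRing R] [Algebra S R]

theorem mapMatrix_signDiagonal (φ : R →ₐ[S] R) (ε : n → ℤˣ) :
    φ.mapMatrix (signDiagonal ε : Matrix n n R) = signDiagonal ε := by
  simp [signDiagonal, diagonal_map]

def twistedNegTranspose (φ : R →ₐ[S] R) (ε : n → ℤˣ) : Matrix n n R →ₗ⁅S⁆ Matrix n n R where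
  toFun A := -(signDiagonal ε * (φ.mapMatrix A)ᵀ * signDiagonal ε)
  map_add' A B := by
    simp only [map_add, transpose_add, Matrix.mul_add, Matrix.add_mul, neg_add]
  map_smul' c A := by
    simp only [map_smul, transpose_smul, Matrix.mul_smul, Matrix.smul_mul, smul_neg,
      RingHom.id_apply]
  map_lie' {A B} := by
    simp only [Ring.lie_def, map_sub, map_mul, transpose_sub, transpose_mul, Matrix.mul_sub,
      Matrix.sub_mul, Matrix.neg_mul, Matrix.mul_neg, neg_neg, Matrix.mul_assoc,
      signDiagonal_mul_signDiagonal_mul]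
    abel

variable (φ : R →ₐ[S] R) (ε : n → ℤˣ)

theorem twistedNegTranspose_apply (A : Matrix n n R) :
    twistedNegTranspose φ ε A = -(signDiagonal ε * (A.map φ)ᵀ * signDiagonal ε) :=
  rfl

theorem trace_twistedNegTranspose (A : Matrix n n R) :
    trace (twistedNegTranspose φ ε A) = -φ (trace A) := by
  rw [twistedNegTranspose_apply, trace_neg, trace_mul_cycle, signDiagonal_mul_self,
    Matrix.one_mul, trace_transpose, AddMonoidHom.map_trace]

theorem involutive_twistedNegTranspose (hφ : Function.Involutive φ) :
    Function.Involutive (twistedNegTranspose φ ε) := by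
  intro A
  have hφφ : φ.mapMatrix (φ.mapMatrix A)ᵀ = Aᵀ := by
    rw [AlgHom.mapMatrix_apply, AlgHom.mapMatrix_apply, transpose_map, Matrix.map_map,
      hφ.comp_self, Matrix.map_id]
  change -(signDiagonal ε * (φ.mapMatrix (-(signDiagonal ε * (φ.mapMatrix A)ᵀ
    * signDiagonal ε)))ᵀ * signDiagonal ε) = A
  rw [map_neg, map_mul, map_mul, mapMatrix_signDiagonal, hφφ, transpose_neg, transpose_mul,
    transpose_mul, transpose_transpose, signDiagonal_transpose]
  simp only [Matrix.neg_mul, Matrix.mul_neg, neg_neg, Matrix.mul_assoc,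
    signDiagonal_mul_signDiagonal_mul, signDiagonal_mul_self, Matrix.mul_one]

theorem twistedNegTranspose_single (i j : n) (a : R) :
    twistedNegTranspose φ ε (single i j a) = single j i (-((ε i * ε j : ℤˣ) : ℤ) • φ a) := by
  ext k l
  rw [twistedNegTranspose_apply, map_single _ _ _ φ, transpose_single]
  simp only [signDiagonal, diagonal_mul, mul_diagonal, single_apply, neg_apply, zsmul_eq_mul]
  split_ifs with h
  · obtain ⟨rfl, rfl⟩ := h
    push_cast
    ring
  · simp

end Matrix

/-- The extension of `ω` to the `gl(N)` loop algebra. -/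
def glLoopOmega (N : ℕ) : gl N →ₗ⁅ℂ⁆ gl N :=
  twistedNegTranspose (invertScale ((-1 : ℂˣ) ^ N)) fun i : Fin N => (-1 : ℤˣ) ^ (i : ℕ)

theorem glLoopOmega_T_smul_single (N : ℕ) (n : ℤ) (i j : Fin N) :
    glLoopOmega N ((T n : ℂ[T;T⁻¹]) • single i j 1)
      = (-((-1 : ℂ) ^ ((i : ℕ) + (j : ℕ)) * (-1 : ℂ) ^ (n * (N : ℤ)))) •
          ((T (-n) : ℂ[T;T⁻¹]) • single j i 1) := by
  rw [smul_single, smul_single, smul_single, glLoopOmega, twistedNegTranspose_single]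
  congr 1
  rw [smul_eq_mul, smul_eq_mul, mul_one, mul_one, invertScale_T, ← Int.cast_smul_eq_zsmul ℂ,
    smul_smul]
  congr 1
  push_cast
  rw [mul_comm n, _root_.zpow_mul, zpow_natCast, pow_add]
  ring

theorem involutive_glLoopOmega (N : ℕ) : Function.Involutive (glLoopOmega N) :=
  involutive_twistedNegTranspose _ _ (involutive_invertScale _)

def loopOmega (N : ℕ) : slC N →ₗ⁅ℂ⁆ slC N :=
  (glLoopOmega N).restrict (slC N) fun A (hA : trace A = 0) => by
    change trace _ = 0
    rw [glLoopOmega, trace_twistedNegTranspose, hA, map_zero, neg_zero]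

theorem involutive_loopOmega (N : ℕ) : Function.Involutive (loopOmega N) :=
  fun A => Subtype.ext (involutive_glLoopOmega N A)

theorem loopOmega_TE (N : ℕ) (n : ℤ) (i j : Fin N) (h : i ≠ j) :
    loopOmega N (TE N n i j h)
      = (((-1 : ℂ) ^ ((i : ℕ) + (j : ℕ) + 1)) * ((-1 : ℂ) ^ (n * (N : ℤ)))) •
          TE N (-n) j i h.symm := by
  apply Subtype.ext
  change glLoopOmega N ((T n : ℂ[T;T⁻¹]) • single i j 1)
    = _ • ((T (-n) : ℂ[T;T⁻¹]) • single j i 1)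
  rw [glLoopOmega_T_smul_single, pow_succ]
  ring_nf

theorem loopOmega_TH (N : ℕ) (n : ℤ) (k : Fin N) (hk : (k : ℕ) + 1 < N) :
    loopOmega N (TH N n k hk) = (-((-1 : ℂ) ^ (n * (N : ℤ)))) • TH N (-n) k hk := by
  apply Subtype.ext
  change glLoopOmega N ((T n : ℂ[T;T⁻¹]) • (single k k 1 - single _ _ 1))
    = _ • ((T (-n) : ℂ[T;T⁻¹]) • (single k k 1 - single _ _ 1))
  simp only [smul_sub, map_sub, glLoopOmega_T_smul_single, ← two_mul, pow_mul, neg_one_sq,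
    one_pow, one_mul]

theorem omega_is_involutive_lie_automorphism_general (N : ℕ) :
    ∃ ω : ↥(slC N) →ₗ[ℂ] ↥(slC N),
      (∀ (n : ℤ) (i j : Fin N) (h : i ≠ j),
        ω (TE N n i j h)
          = (((-1 : ℂ) ^ ((i : ℕ) + (j : ℕ) + 1)) * ((-1 : ℂ) ^ (n * (N : ℤ)))) •
              TE N (-n) j i h.symm) ∧
      (∀ (n : ℤ) (k : Fin N) (hk : (k : ℕ) + 1 < N),
        ω (TH N n k hk) = (-((-1 : ℂ) ^ (n * (N : ℤ)))) • TH N (-n) k hk) ∧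
      (∀ x y : ↥(slC N), ω ⁅x, y⁆ = ⁅ω x, ω y⁆) ∧
      (∀ x : ↥(slC N), ω (ω x) = x) :=
  ⟨(loopOmega N).toLinearMap, loopOmega_TE N, loopOmega_TH N, (loopOmega N).map_lie,
    involutive_loopOmega N⟩

/-- The map `ω` on the `sl(N)` loop algebra, defined on the basis elements
`tⁿE_{ij}` and `tⁿH_k` by `ω(tⁿE_{ij}) = (-1)^{i+j+1+nN} t^{-n}E_{ji}` and
`ω(tⁿH_k) = (-1)^{1+nN} t^{-n}H_k`, is an involutive Lie algebra automorphism. -/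
theorem omega_is_involutive_lie_automorphism (N : ℕ) (hN : 2 ≤ N) :
    ∃ ω : ↥(slC N) →ₗ[ℂ] ↥(slC N),
      (∀ (n : ℤ) (i j : Fin N) (h : i ≠ j),
        ω (TE N n i j h)
          = (((-1 : ℂ) ^ ((i : ℕ) + (j : ℕ) + 1)) * ((-1 : ℂ) ^ (n * (N : ℤ)))) •
              TE N (-n) j i h.symm) ∧
      (∀ (n : ℤ) (k : Fin N) (hk : (k : ℕ) + 1 < N),
        ω (TH N n k hk) = (-((-1 : ℂ) ^ (n * (N : ℤ)))) • TH N (-n) k hk) ∧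
      (∀ x y : ↥(slC N), ω ⁅x, y⁆ = ⁅ω x, ω y⁆) ∧
      (∀ x : ↥(slC N), ω (ω x) = x) :=
  omega_is_involutive_lie_automorphism_general N
end
end

section
/- In the sl(N) Onsager algebra A_N (N ≥ 4), [e_1, S_1(r)] = S_2(r-1) for 2 ≤ r ≤ N-1, where S_k(r) is the right-nested string commutator. -/
noncomputable section

/-- The generalized Dolan–Grady relations for a cyclic family `e` of `N` elements. -/
def DolanGrady {N : ℕ} [NeZero N] {L : Type*} [LieRing L] (e : Fin N → L) : Prop :=
  (∀ i j : Fin N, (j = i + 1 ∨ i = j + 1) → ⁅e i, ⁅e i, e j⁆⁆ = e j) ∧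
  (∀ i j : Fin N, i ≠ j → j ≠ i + 1 → i ≠ j + 1 → ⁅e i, e j⁆ = 0)

/-- The right-nested string `S_k(r) = [e_k,[e_{k+1},...,e_{k+r-1}]...]`, with `S _ 0 = 0`. -/
def S {N : ℕ} [NeZero N] {L : Type*} [LieRing L] (e : Fin N → L) : ℕ → Fin N → L
  | 0, _ => 0
  | 1, k => e k
  | (r + 2), k => ⁅e k, S e (r + 1) (k + 1)⁆

/-! `S_1(r) = [e_1, [e_2, S_3(r-2)]]`, and `e_1` commutes with `e_3, …, e_r` (none of them is
adjacent to `e_1` because `r ≤ N - 1`), hence with `S_3(r-2)`. So `ad e_1` acts only on the outer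
entries: `[e_1, S_1(r)] = [[e_1, [e_1, e_2]], S_3(r-2)] = [e_2, S_3(r-2)] = S_2(r-1)`. -/

theorem lie_lie_eq_of_lie_eq_zero {L : Type*} [LieRing L] {x z : L} (hxz : ⁅x, z⁆ = 0) (y : L) :
    ⁅x, ⁅y, z⁆⁆ = ⁅⁅x, y⁆, z⁆ := by
  rw [leibniz_lie, hxz, lie_zero, add_zero]

theorem DolanGrady.lie_eq_zero_of_val_add_two_le {N : ℕ} [NeZero N] {L : Type*} [LieRing L]
    {e : Fin N → L} (hDG : DolanGrady e) {i j : Fin N} (hij : i.val + 2 ≤ j.val)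
    (hji : j.val + 1 < N + i.val) :
    ⁅e i, e j⁆ = 0 := by
  have hi : (i + 1).val = i.val + 1 := Fin.val_add_one_of_lt' (by omega)
  refine hDG.2 i j (fun h => by omega) (fun h => by omega) fun h => ?_
  have hj := congrArg Fin.val h
  rcases Nat.lt_or_ge (j.val + 1) N with hlt | hge
  · rw [Fin.val_add_one_of_lt' hlt] at hj
    omega
  · rw [Fin.val_add, Fin.val_one', Nat.mod_eq_of_lt (by omega : 1 < N),
      (by omega : j.val + 1 = N), Nat.mod_self] at hj
    omega

open Fin.NatCast in
theorem lie_S_eq_zero_of_forall_lie_eq_zero {N : ℕ} [NeZero N] {L : Type*} [LieRing L]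
    (e : Fin N → L) (x : L) :
    ∀ (m : ℕ) (k : Fin N), (∀ i < m, ⁅x, e (k + i)⁆ = 0) → ⁅x, S e m k⁆ = 0
  | 0, _, _ => lie_zero x
  | 1, k, h => by simpa [S] using h 0 one_pos
  | m + 2, k, h => by
    have hk : ⁅x, e k⁆ = 0 := by simpa using h 0 (by omega)
    have hS : ⁅x, S e (m + 1) (k + 1)⁆ = 0 :=
      lie_S_eq_zero_of_forall_lie_eq_zero e x (m + 1) (k + 1) fun i hi => by
        have := h (i + 1) (by omega)
        rwa [Nat.cast_succ, add_comm (i : Fin N), ← add_assoc] at this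
    rw [S, leibniz_lie, hk, hS, zero_lie, lie_zero, add_zero]

theorem bracket_e1_string_at_one_general (N : ℕ) [NeZero N]
    {L : Type*} [LieRing L]
    (e : Fin N → L) (hDG : DolanGrady e)
    (r : ℕ) (hr2 : 2 ≤ r) (hr : r ≤ N - 1) :
    ⁅e (1 : Fin N), S e r (1 : Fin N)⁆ = S e (r - 1) (2 : Fin N) := by
  have h12 : (1 : Fin N) + 1 = 2 := Fin.ext (by simp [Fin.val_add])
  have he12 : ⁅e (1 : Fin N), ⁅e 1, e 2⁆⁆ = e 2 := hDG.1 1 2 (.inl h12.symm)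
  obtain ⟨s, rfl⟩ : ∃ s, r = s + 2 := ⟨r - 2, by omega⟩
  rw [show s + 2 - 1 = s + 1 by omega]
  rcases s with _ | t
  · simpa [S, h12] using he12
  · have hX : ⁅e (1 : Fin N), S e (t + 1) 3⁆ = 0 := by
      refine lie_S_eq_zero_of_forall_lie_eq_zero e _ _ _ fun i hi =>
        hDG.lie_eq_zero_of_val_add_two_le ?_ ?_
      all_goals simp (disch := omega) only [Fin.val_add, Fin.coe_ofNat_eq_mod,
        Fin.coe_natCast_eq_mod, Nat.mod_eq_of_lt]
      all_goals omega
    have h23 : (2 : Fin N) + 1 = 3 := Fin.ext (by simp [Fin.val_add])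
    simp only [S, h12, h23]
    rw [lie_lie_eq_of_lie_eq_zero hX, lie_lie_eq_of_lie_eq_zero hX, he12]

/-- If `e_1,…,e_N` (`N ≥ 4`) satisfy the generalized Dolan–Grady relations,
then `[e_1, S_1(r)] = S_2(r-1)` for `2 ≤ r ≤ N - 1`. -/
theorem bracket_e1_string_at_one (N : ℕ) (hN : 4 ≤ N) [NeZero N]
    {L : Type*} [LieRing L] [LieAlgebra ℂ L]
    (e : Fin N → L) (hDG : DolanGrady e)
    (r : ℕ) (hr2 : 2 ≤ r) (hr : r ≤ N - 1) :
    ⁅e (1 : Fin N), S e r (1 : Fin N)⁆ = S e (r - 1) (2 : Fin N) :=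
  bracket_e1_string_at_one_general N e hDG r hr2 hr
end
end

section
/- In the sl(N) Onsager algebra A_N (N ≥ 4), for a string S_k(r) with k + r ≥ N + 3 and r ≤ N - 1, the commutator [e_1, S_k(r)] = 0. -/
noncomputable section

/-!
Since `e₁` commutes with `e_j` for `3 ≤ j ≤ N - 1`, it passes through the leading generators
`e_k, …, e_{N-1}` of the string, which reduces the claim to the string
`S_N(m) = [e₀, [e₁, [e₂, T]]]` with `3 ≤ m ≤ N - 1`. The tail `T` only involves
`e₃, …, e_{N-2}`, which commute with `e₀` and `e₁`, so `[e₁, S_N(m)] = [[e₁, [e₀, [e₁, e₂]]], T]`,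
and `[e₁, [e₀, [e₁, e₂]]] = 0` follows from the Dolan–Grady relations.
-/

open Fin.NatCast

section LieRing

variable {L : Type*} [LieRing L]

theorem lie_lie_of_lie_eq_zero {x y z : L} (h : ⁅x, z⁆ = 0) : ⁅x, ⁅y, z⁆⁆ = ⁅⁅x, y⁆, z⁆ := by
  rw [leibniz_lie, h, lie_zero, add_zero]

/-- `V = ⁅b, ⁅a, ⁅b, c⁆⁆⁆` equals both `-⁅⁅a, b⁆, ⁅b, c⁆⁆` and `⁅⁅a, b⁆, ⁅b, c⁆⁆`, so `2 • V = 0`. -/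
theorem lie_lie_lie_eq_zero [IsAddTorsionFree L] {a b c : L} (hba : ⁅b, ⁅b, a⁆⁆ = a)
    (hbc : ⁅b, ⁅b, c⁆⁆ = c) (hac : ⁅a, c⁆ = 0) : ⁅b, ⁅a, ⁅b, c⁆⁆⁆ = 0 := by
  have hneg : ⁅b, ⁅a, ⁅b, c⁆⁆⁆ = -⁅⁅a, b⁆, ⁅b, c⁆⁆ := by
    rw [leibniz_lie, hbc, hac, add_zero, ← lie_skew b a, neg_lie]
  have hbab : ⁅b, ⁅a, b⁆⁆ = -a := by rw [← lie_skew a b, lie_neg, hba]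
  have hpos : ⁅b, ⁅a, ⁅b, c⁆⁆⁆ = ⁅⁅a, b⁆, ⁅b, c⁆⁆ := by
    rw [lie_lie_of_lie_eq_zero hac, leibniz_lie, hbab, neg_lie, hac, neg_zero, zero_add]
  exact self_eq_neg.mp (hneg.trans (congrArg Neg.neg hpos.symm))

end LieRing

theorem Fin.natCast_ne_natCast {N a b : ℕ} [NeZero N] (hab : a < b) (hba : b < a + N) :
    (a : Fin N) ≠ b := by
  intro h
  have hdvd : N ∣ b - a :=
    Nat.dvd_of_mod_eq_zero (Nat.sub_mod_eq_zero_of_mod_eq (by simpa using congrArg Fin.val h.symm))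
  exact absurd (Nat.le_of_dvd (by omega) hdvd) (by omega)

section Strings

variable {N : ℕ} [NeZero N] {L : Type*} [LieRing L] (e : Fin N → L)

theorem lie_S_succ_eq_zero {x : L} {a : Fin N} {r : ℕ} (ha : ⁅x, e a⁆ = 0)
    (hr : ⁅x, S e r (a + 1)⁆ = 0) : ⁅x, S e (r + 1) a⁆ = 0 := by
  cases r with
  | zero => exact ha
  | succ r =>
    change ⁅x, ⁅e a, S e (r + 1) (a + 1)⁆⁆ = 0
    rw [leibniz_lie, ha, hr, zero_lie, lie_zero, add_zero]

theorem lie_S_add_eq_zero {x : L} {j r : ℕ} {a : Fin N} (ha : ∀ i < j, ⁅x, e (a + i)⁆ = 0)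
    (hr : ⁅x, S e r (a + j)⁆ = 0) : ⁅x, S e (j + r) a⁆ = 0 := by
  induction j generalizing a with
  | zero => simpa using hr
  | succ j ih =>
    rw [Nat.add_right_comm]
    refine lie_S_succ_eq_zero e (by simpa using ha 0 j.succ_pos) (ih (fun i hi => ?_) ?_)
    · rw [add_assoc, add_comm 1, ← Nat.cast_succ]
      exact ha (i + 1) (by omega)
    · rwa [add_assoc, add_comm 1, ← Nat.cast_succ]

theorem lie_S_eq_zero {x : L} {j : ℕ} {a : Fin N} (ha : ∀ i < j, ⁅x, e (a + i)⁆ = 0) :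
    ⁅x, S e j a⁆ = 0 :=
  lie_S_add_eq_zero (r := 0) e ha (lie_zero x)

variable {e}

theorem DolanGrady.lie_natCast_eq_zero (hDG : DolanGrady e) {i j : ℕ} (hij : i + 2 ≤ j)
    (hji : j + 2 ≤ i + N) : ⁅e i, e j⁆ = 0 := by
  refine hDG.2 _ _ (Fin.natCast_ne_natCast (by omega) (by omega)) ?_ ?_
  · simpa using (Fin.natCast_ne_natCast (N := N) (a := i + 1) (b := j) (by omega) (by omega)).symm
  · simpa using Fin.natCast_ne_natCast (N := N) (a := i) (b := j + 1) (by omega) (by omega)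

theorem DolanGrady.lie_one_S_zero_eq_zero [IsAddTorsionFree L] (hDG : DolanGrady e) {m : ℕ}
    (hm : 3 ≤ m) (hmN : m < N) : ⁅e 1, S e m 0⁆ = 0 := by
  have h10 : ⁅e 1, ⁅e 1, e 0⁆⁆ = e 0 := hDG.1 1 0 (.inr (zero_add 1).symm)
  have h12 : ⁅e 1, ⁅e 1, e 2⁆⁆ = e 2 := hDG.1 1 2 (.inl one_add_one_eq_two.symm)
  have h02 : ⁅e 0, e 2⁆ = 0 := by
    simpa using hDG.lie_natCast_eq_zero (i := 0) (j := 2) le_rfl (by omega)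
  have hcore : ⁅e 1, ⁅e 0, ⁅e 1, e 2⁆⁆⁆ = 0 := lie_lie_lie_eq_zero h10 h12 h02
  obtain ⟨t, rfl⟩ : ∃ t, m = t + 3 := ⟨m - 3, by omega⟩
  change ⁅e 1, ⁅e 0, ⁅e (0 + 1), S e (t + 1) (0 + 1 + 1)⁆⁆⁆ = 0
  rw [zero_add, one_add_one_eq_two]
  cases t with
  | zero => exact hcore
  | succ t =>
    change ⁅e 1, ⁅e 0, ⁅e 1, ⁅e 2, S e (t + 1) (2 + 1)⁆⁆⁆⁆ = 0
    have hT {x : ℕ} (hx : x ≤ 1) : ⁅e x, S e (t + 1) (2 + 1)⁆ = 0 :=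
      lie_S_eq_zero e fun i _ => by
        rw [show (2 + 1 : Fin N) + i = ((3 + i : ℕ) : Fin N) by push_cast; norm_num]
        exact hDG.lie_natCast_eq_zero (by omega) (by omega)
    have hT0 : ⁅e 0, S e (t + 1) (2 + 1)⁆ = 0 := by simpa using hT zero_le_one
    have hT1 : ⁅e 1, S e (t + 1) (2 + 1)⁆ = 0 := by simpa using hT le_rfl
    rw [lie_lie_of_lie_eq_zero hT1, lie_lie_of_lie_eq_zero hT0, lie_lie_of_lie_eq_zero hT1, hcore,
      zero_lie]

end Strings

theorem bracket_e1_string_wrap_zero_general (N : ℕ) [NeZero N]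
    {L : Type*} [LieRing L] [LieAlgebra ℂ L]
    (e : Fin N → L) (hDG : DolanGrady e)
    (k r : ℕ) (hkN : k ≤ N) (hr : r ≤ N - 1)
    (hkr : N + 3 ≤ k + r) :
    ⁅e (1 : Fin N), S e r (Fin.ofNat N (k : ℕ))⁆ = 0 := by
  have : IsAddTorsionFree L := .of_isTorsionFree ℂ L
  obtain ⟨m, rfl⟩ : ∃ m, r = (N - k) + m := ⟨r - (N - k), by omega⟩
  rw [Fin.ofNat_eq_cast]
  refine lie_S_add_eq_zero e (fun i _ => ?_) ?_
  · rw [← Nat.cast_add]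
    simpa using hDG.lie_natCast_eq_zero (i := 1) (j := k + i) (by omega) (by omega)
  · rw [← Nat.cast_add, Nat.add_sub_cancel' hkN, Fin.natCast_self]
    exact hDG.lie_one_S_zero_eq_zero (by omega) (by omega)

/-- If `e_1,…,e_N` (`N ≥ 4`) satisfy the generalized Dolan–Grady relations,
then for a string `S_k(r)` with `1 ≤ k ≤ N`, `1 ≤ r ≤ N - 1` and `k + r ≥ N + 3`, one has
`[e_1, S_k(r)] = 0`. -/
theorem bracket_e1_string_wrap_zero (N : ℕ) (hN : 4 ≤ N) [NeZero N]
    {L : Type*} [LieRing L] [LieAlgebra ℂ L]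
    (e : Fin N → L) (hDG : DolanGrady e)
    (k r : ℕ) (hk1 : 1 ≤ k) (hkN : k ≤ N) (hr1 : 1 ≤ r) (hr : r ≤ N - 1)
    (hkr : N + 3 ≤ k + r) :
    ⁅e (1 : Fin N), S e r (Fin.ofNat N (k : ℕ))⁆ = 0 :=
  bracket_e1_string_wrap_zero_general N e hDG k r hkN hr hkr
end
end

section
/- In the sl(N) Onsager algebra A_N (N ≥ 4), [e_1, S_1(N)] = -2 S_1(N+1), where S_k(r) is the right-nested string commutator. -/
/-
Write `N = n + 3`. Unfolding the strings, `S_1(N) = [e_1,[e_2,T e_0]]` and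
`S_1(N+1) = [e_1,[e_2,T [e_0,e_1]]]`, where `T = ad e_3 ∘ ⋯ ∘ ad e_{N-1}`. The generators in `T`
are not adjacent to `e_1`, so `D = ad e_1` commutes with `T`; hence `D² (T e_0) = T e_0`, and also
`D² e_2 = e_2`. For any derivation `D` with `D² b = b` and `D² x = x`, the Leibniz rule gives
`D² [b,x] = 2 ([b,x] + [D b, D x]) = 2 D [b, D x]`; with `b = e_2`, `x = T e_0` this is the claim.
-/

noncomputable section

theorem lie_lie_lie_eq_two_nsmul {L : Type*} [LieRing L] {a b x : L}
    (hb : ⁅a, ⁅a, b⁆⁆ = b) (hx : ⁅a, ⁅a, x⁆⁆ = x) :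
    ⁅a, ⁅a, ⁅b, x⁆⁆⁆ = 2 • ⁅a, ⁅b, ⁅a, x⁆⁆⁆ := by
  rw [leibniz_lie a b x, lie_add, leibniz_lie a ⁅a, b⁆ x, leibniz_lie a b ⁅a, x⁆, hb, hx]
  abel

open Fin.NatCast Fin.CommRing

def nestedLie {N : ℕ} [NeZero N] {L : Type*} [LieRing L] (e : Fin N → L) :
    ℕ → Fin N → L → L
  | 0, _, x => x
  | (r + 1), m, x => ⁅e m, nestedLie e r (m + 1) x⁆

section NestedLie

variable {N : ℕ} [NeZero N] {L : Type*} [LieRing L] (e : Fin N → L)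

theorem nestedLie_neg : ∀ (r : ℕ) (m : Fin N) (x : L),
    nestedLie e r m (-x) = -nestedLie e r m x
  | 0, _, _ => rfl
  | (r + 1), m, x => by rw [nestedLie, nestedLie, nestedLie_neg, lie_neg]

theorem add_natCast_succ (m : Fin N) (r : ℕ) : m + ((r + 1 : ℕ) : Fin N) = m + 1 + r := by
  push_cast
  ring

theorem nestedLie_succ' : ∀ (r : ℕ) (m : Fin N) (x : L),
    nestedLie e (r + 1) m x = nestedLie e r m ⁅e (m + r), x⁆
  | 0, m, x => by simp [nestedLie]
  | (r + 1), m, x => by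
    rw [nestedLie, nestedLie_succ' r (m + 1) x, nestedLie, ← add_natCast_succ]

theorem S_succ_eq_nestedLie : ∀ (r : ℕ) (k : Fin N),
    S e (r + 1) k = nestedLie e r k (e (k + r))
  | 0, k => by simp [S, nestedLie]
  | (r + 1), k => by rw [S, S_succ_eq_nestedLie r (k + 1), nestedLie, ← add_natCast_succ]

theorem lie_nestedLie_of_lie_eq_zero (a : L) : ∀ (r : ℕ) (m : Fin N) (x : L),
    (∀ i < r, ⁅a, e (m + i)⁆ = 0) → ⁅a, nestedLie e r m x⁆ = nestedLie e r m ⁅a, x⁆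
  | 0, _, _, _ => rfl
  | (r + 1), m, x, h => by
    have hm : ⁅a, e m⁆ = 0 := by simpa using h 0 r.succ_pos
    have ih := lie_nestedLie_of_lie_eq_zero a r (m + 1) x fun i hi => by
      simpa only [add_natCast_succ] using h (i + 1) (by omega)
    rw [nestedLie, leibniz_lie, hm, zero_lie, zero_add, ih, nestedLie]

end NestedLie

section ClosedString

variable {n : ℕ} [NeZero (n + 3)] {L : Type*} [LieRing L] (e : Fin (n + 3) → L)

theorem S_closed_eq : S e (n + 3) 1 = ⁅e 1, ⁅e 2, nestedLie e n 3 (e 0)⁆⁆ := by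
  have h0 : (1 : Fin (n + 3)) + (n + 2 : ℕ) = 0 := by
    have h := Fin.natCast_self (n + 3)
    push_cast at h ⊢
    linear_combination h
  rw [S_succ_eq_nestedLie, h0, nestedLie, nestedLie, one_add_one_eq_two, two_add_one_eq_three]

theorem S_closed_succ_eq :
    S e (n + 3 + 1) 1 = ⁅e 1, ⁅e 2, nestedLie e n 3 ⁅e 0, e 1⁆⁆⁆ := by
  have h3 : (3 : Fin (n + 3)) + n = 0 := by
    have h := Fin.natCast_self (n + 3)
    push_cast at h ⊢
    linear_combination h
  rw [S_succ_eq_nestedLie, Fin.natCast_self, add_zero, nestedLie, nestedLie, nestedLie_succ',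
    one_add_one_eq_two, two_add_one_eq_three, h3]

end ClosedString

theorem DolanGrady.lie_eq_zero {N : ℕ} [NeZero N] {L : Type*} [LieRing L] {e : Fin N → L}
    (h : DolanGrady e) {i j : Fin N} (hij : i.val + 1 < j.val) (hji : j.val + 1 < N + i.val) :
    ⁅e i, e j⁆ = 0 := by
  obtain ⟨n, rfl⟩ : ∃ n, N = n + 1 := ⟨N - 1, by have := NeZero.pos N; omega⟩
  have hne : i ≠ j ∧ j ≠ i + 1 ∧ i ≠ j + 1 := by
    simp only [ne_eq, Fin.ext_iff, Fin.val_add_one]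
    split_ifs with hi hj hj <;> simp only [Fin.val_last] at hi hj <;> omega
  exact h.2 i j hne.1 hne.2.1 hne.2.2

/-- If `e_1,…,e_N` (`N ≥ 4`) satisfy the generalized Dolan–Grady relations,
then `[e_1, S_1(N)] = -2 S_1(N+1)`. -/
theorem bracket_e1_closed_string_one (N : ℕ) (hN : 4 ≤ N) [NeZero N]
    {L : Type*} [LieRing L] [LieAlgebra ℂ L]
    (e : Fin N → L) (hDG : DolanGrady e) :
    ⁅e (1 : Fin N), S e N (1 : Fin N)⁆ = (-2 : ℂ) • S e (N + 1) (1 : Fin N) := by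
  obtain ⟨n, rfl⟩ := Nat.exists_eq_add_of_le' (le_of_add_le_right hN : 3 ≤ N)
  have hT : ∀ x, ⁅e 1, nestedLie e n 3 x⁆ = nestedLie e n 3 ⁅e 1, x⁆ := fun x =>
    lie_nestedLie_of_lie_eq_zero e (e 1) n 3 x fun i hi => by
      have h3i : ((3 : Fin (n + 3)) + (i : ℕ)).val = 3 + i := by simp [Fin.val_add]; omega
      exact hDG.lie_eq_zero (by rw [h3i, Fin.val_one]; omega) (by rw [h3i, Fin.val_one]; omega)
  have he₂ : ⁅e 1, ⁅e 1, e 2⁆⁆ = e 2 := hDG.1 1 2 (Or.inl one_add_one_eq_two.symm)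
  have hTe₀ : ⁅e 1, ⁅e 1, nestedLie e n 3 (e 0)⁆⁆ = nestedLie e n 3 (e 0) := by
    rw [hT, hT, hDG.1 1 0 (Or.inr (zero_add 1).symm)]
  calc ⁅e 1, S e (n + 3) 1⁆
      = 2 • ⁅e 1, ⁅e 2, nestedLie e n 3 ⁅e 1, e 0⁆⁆⁆ := by
        rw [S_closed_eq, lie_lie_lie_eq_two_nsmul he₂ hTe₀, hT]
    _ = (-2 : ℂ) • S e (n + 3 + 1) 1 := by
        rw [S_closed_succ_eq, ← lie_skew (e 0) (e 1), nestedLie_neg, lie_neg, lie_neg]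
        module
end
end
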